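/- Let f(x,y) = sqrt((x+y-2)/(xy)) and for real k ≥ 2 define g(x,k) = k(-f(x,6) + f(x+1,5)) + f(x+1,3). Then for every fixed k ≥ 2, g(x,k) is increasing in x on x ≥ 2. -/

import Mathlib

/-!
With `f = sqrtRatio`, `∂ₓg = k (A - B) - C` where `A`, `B`, `C` are the (nonnegative) values of
`-∂ₓf` at `(x, 6)`, `(x + 1, 5)`, `(x + 1, 3)`. Their squares are rational functions of `x`, so
comparing squares gives `B ≤ A`, and `(2B + C)² ≤ 6/5 (2B)² + 6 C² ≤ (2A)²` gives `C ≤ 2 (A - B)`.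
Hence `∂ₓg ≥ (k - 2) (A - B) ≥ 0`, already for `x > 0`.
-/

open Real Set

noncomputable def sqrtRatio (x y : ℝ) : ℝ := √((x + y - 2) / (x * y))

noncomputable def sqrtRatioNegDeriv (x y : ℝ) : ℝ := (y - 2) / (y * x ^ 2) / (2 * sqrtRatio x y)

lemma hasDerivAt_sqrtRatio {x y : ℝ} (hx : x ≠ 0) (hy : y ≠ 0) (hxy : x + y - 2 ≠ 0) :
    HasDerivAt (sqrtRatio · y) (-sqrtRatioNegDeriv x y) x := by
  have hnum : HasDerivAt (fun t => t + y - 2) 1 x := by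
    simpa using ((hasDerivAt_id x).add_const y).sub_const 2
  have hden : HasDerivAt (fun t => t * y) y x := by simpa using (hasDerivAt_id x).mul_const y
  have hquot : HasDerivAt (fun t => (t + y - 2) / (t * y)) _ x :=
    hnum.div hden (mul_ne_zero hx hy)
  refine (hquot.sqrt (div_ne_zero hxy (mul_ne_zero hx hy))).congr_deriv ?_
  rw [sqrtRatioNegDeriv, sqrtRatio, ← neg_div]
  congr 1
  field_simp
  ring

lemma sqrtRatioNegDeriv_nonneg (x : ℝ) {y : ℝ} (hy : 2 ≤ y) : 0 ≤ sqrtRatioNegDeriv x y := by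
  have : 0 ≤ y - 2 := by linarith
  unfold sqrtRatioNegDeriv sqrtRatio
  positivity

lemma sqrtRatioNegDeriv_sq {x y : ℝ} (hx : 0 < x) (hy : 0 < y) (hxy : 0 < x + y - 2) :
    sqrtRatioNegDeriv x y ^ 2 = (y - 2) ^ 2 / (4 * y * x ^ 3 * (x + y - 2)) := by
  rw [sqrtRatioNegDeriv, sqrtRatio, div_pow, mul_pow, sq_sqrt (by positivity)]
  field_simp
  ring

lemma sqrtRatioNegDeriv_combination_nonneg {k x : ℝ} (hk : 2 ≤ k) (hx : 0 < x) :
    0 ≤ k * (sqrtRatioNegDeriv x 6 - sqrtRatioNegDeriv (x + 1) 5) - sqrtRatioNegDeriv (x + 1) 3 := by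
  set A := sqrtRatioNegDeriv x 6
  set B := sqrtRatioNegDeriv (x + 1) 5
  set C := sqrtRatioNegDeriv (x + 1) 3
  have hA0 : 0 ≤ A := sqrtRatioNegDeriv_nonneg x (by norm_num)
  have hA : A ^ 2 = 2 / (3 * x ^ 3 * (x + 4)) := by
    rw [sqrtRatioNegDeriv_sq hx (by norm_num) (by linarith),
      div_eq_div_iff (by ring_nf; positivity) (by positivity)]
    ring
  have hB : B ^ 2 = 9 / (20 * (x + 1) ^ 3 * (x + 4)) := by
    rw [sqrtRatioNegDeriv_sq (by linarith) (by norm_num) (by linarith),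
      div_eq_div_iff (by ring_nf; positivity) (by positivity)]
    ring
  have hC : C ^ 2 = 1 / (12 * (x + 1) ^ 3 * (x + 2)) := by
    rw [sqrtRatioNegDeriv_sq (by linarith) (by norm_num) (by linarith),
      div_eq_div_iff (by ring_nf; positivity) (by positivity)]
    ring
  have hBA : B ≤ A := by
    refine le_of_pow_le_pow_left₀ two_ne_zero hA0 ?_
    rw [hA, hB, div_le_div_iff₀ (by positivity) (by positivity)]
    nlinarith [pow_pos hx 3, pow_pos hx 2]
  have hBCA : 2 * B + C ≤ 2 * A := by
    refine le_of_pow_le_pow_left₀ two_ne_zero (by positivity) ?_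
    -- `(u + v)² ≤ (1 + t) u² + (1 + 1/t) v²` with `t = 1/5`, which leaves the leading
    -- coefficients `7.98 ≤ 8` in the polynomial inequality
    calc (2 * B + C) ^ 2 ≤ 6 / 5 * (4 * B ^ 2) + 6 * C ^ 2 := by
          nlinarith [sq_nonneg (2 * B - 5 * C)]
      _ ≤ (2 * A) ^ 2 := by
          rw [mul_pow, hA, hB, hC]
          field_simp
          nlinarith [pow_pos hx 2, pow_pos hx 3, pow_pos hx 4]
  nlinarith [mul_nonneg (sub_nonneg.2 hk) (sub_nonneg.2 hBA)]

lemma monotoneOn_sqrtRatio_combination {k : ℝ} (hk : 2 ≤ k) :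
    MonotoneOn (fun x => k * (-sqrtRatio x 6 + sqrtRatio (x + 1) 5) + sqrtRatio (x + 1) 3)
      (Ioi 0) := by
  have hderiv : ∀ x ∈ Ioi (0 : ℝ),
      HasDerivAt (fun x => k * (-sqrtRatio x 6 + sqrtRatio (x + 1) 5) + sqrtRatio (x + 1) 3)
        (k * (sqrtRatioNegDeriv x 6 - sqrtRatioNegDeriv (x + 1) 5)
          - sqrtRatioNegDeriv (x + 1) 3) x := by
    intro x (hx : 0 < x)
    have h6 := hasDerivAt_sqrtRatio (y := 6) hx.ne' (by norm_num) (by linarith)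
    have h5 := (hasDerivAt_sqrtRatio (x := x + 1) (y := 5) (by linarith) (by norm_num)
      (by linarith)).comp_add_const x 1
    have h3 := (hasDerivAt_sqrtRatio (x := x + 1) (y := 3) (by linarith) (by norm_num)
      (by linarith)).comp_add_const x 1
    exact (((h6.neg.add h5).const_mul k).add h3).congr_deriv (by ring)
  refine monotoneOn_of_hasDerivWithinAt_nonneg (convex_Ioi 0)
    (f' := fun x => k * (sqrtRatioNegDeriv x 6 - sqrtRatioNegDeriv (x + 1) 5)
      - sqrtRatioNegDeriv (x + 1) 3)
    (fun x hx => (hderiv x hx).continuousAt.continuousWithinAt) ?_ ?_ <;> rw [interior_Ioi]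
  · exact fun x hx => (hderiv x hx).hasDerivWithinAt
  · exact fun x hx => sqrtRatioNegDeriv_combination_nonneg hk hx

theorem stmt6 (f : ℝ → ℝ → ℝ) (hf : ∀ x y, f x y = Real.sqrt ((x + y - 2) / (x * y)))
    (g : ℝ → ℝ → ℝ) (hg : ∀ x k, g x k = k * (-f x 6 + f (x + 1) 5) + f (x + 1) 3)
    (k : ℝ) (hk : 2 ≤ k) (x1 x2 : ℝ) (hx1 : 2 ≤ x1) (hx12 : x1 ≤ x2) :
    g x1 k ≤ g x2 k := by
  have hg' : ∀ x, g x k = k * (-sqrtRatio x 6 + sqrtRatio (x + 1) 5) + sqrtRatio (x + 1) 3 := by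
    intro x
    simp only [hg, hf, sqrtRatio]
  have hx1_pos : (0 : ℝ) < x1 := by linarith
  rw [hg', hg']
  exact monotoneOn_sqrtRatio_combination hk hx1_pos (hx1_pos.trans_le hx12) hx12
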